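/- For integers k ≥ 2 and m ≥ 4, the difference Δ₃(k,m) = f^{(k,k,1^m)} + f^{(k+1,k+1,1^{m−2})} + f^{(k+2,k+2,1^{m−4})} − f^{(k+2,k,1^{m−2})} satisfies Δ₃(k,m) = ((2k+m)! / ((k+1)! · (k+2)! · m!)) · (k−m+1) · (k−m+2), where both sides are viewed as rational numbers (the factors k−m+1 and k−m+2 being integers that may be negative). -/

import Mathlib

/-- A cell `c = (i, j)` lies in the Young diagram whose row lengths are given by the
list `l` if `j < l[i]` (rows and columns indexed from `0`). -/
def InShape (l : List ℕ) (c : ℕ × ℕ) : Prop := c.2 < l.getD c.1 0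

/-- `T` is a standard Young tableau of the shape with row lengths `l`: the entries give a
bijection from the cells of the shape to `{0, …, n-1}` (where `n = l.sum` is the number of
cells), entries strictly increase along rows and down columns, and `T` vanishes outside
the shape. -/
def IsSYT (l : List ℕ) (T : ℕ × ℕ → ℕ) : Prop :=
  Set.BijOn T {c : ℕ × ℕ | InShape l c} (Set.Iio l.sum) ∧
  (∀ i j, InShape l (i, j + 1) → T (i, j) < T (i, j + 1)) ∧
  (∀ i j, InShape l (i + 1, j) → T (i, j) < T (i + 1, j)) ∧
  (∀ c, ¬ InShape l c → T c = 0)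

open Classical in
/-- The number `f^l` of standard Young tableaux of shape `l`, defined to be `0` when `l`
is not a partition (i.e. not weakly decreasing). -/
noncomputable def fSYT (l : List ℕ) : ℕ :=
  if List.Pairwise (· ≥ ·) l then Nat.card {T : ℕ × ℕ → ℕ // IsSYT l T} else 0

/-- `f^{(a,b,1^t)}` with an integer number `t` of trailing parts equal to `1`;
it is `0` whenever `t < 0` or the resulting list is not a partition. -/
noncomputable def fHook (a b : ℕ) (t : ℤ) : ℕ :=
  if 0 ≤ t then fSYT (a :: b :: List.replicate t.toNat 1) else 0

/-- `f^{(r,s,t)}` for integers `r`, `s`, `t`; it is `0` whenever `(r,s,t)` is not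
a partition. -/
noncomputable def f3 (r s t : ℤ) : ℕ :=
  if 0 ≤ r ∧ 0 ≤ s ∧ 0 ≤ t then fSYT [r.toNat, s.toNat, t.toNat] else 0

/-!
Deleting the cell that holds the largest entry of a standard tableau leaves a standard tableau of
the shape with that corner removed, and conversely, so `f^λ` is the sum of the `f^μ` over the
shapes `μ` obtained from `λ` by removing a corner. On the shapes `(a, c+1, 1^t)` the hook length
value satisfies the same recursion and boundary values, hence equals `f` there, and `Δ₃` becomes a
rational-function identity in `k` and `m`.
-/

open Function Set

def IsNextCell (x y : ℕ × ℕ) : Prop := y = (x.1, x.2 + 1) ∨ y = (x.1 + 1, x.2)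

def IsStandardFilling (S : Set (ℕ × ℕ)) (n : ℕ) (T : ℕ × ℕ → ℕ) : Prop :=
  BijOn T S (Iio n) ∧ (∀ x y, y ∈ S → IsNextCell x y → T x < T y) ∧ ∀ x ∉ S, T x = 0

theorem isSYT_iff_isStandardFilling {l : List ℕ} {T : ℕ × ℕ → ℕ} :
    IsSYT l T ↔ IsStandardFilling {c | InShape l c} l.sum T := by
  constructor
  · rintro ⟨hbij, hrow, hcol, hzero⟩
    refine ⟨hbij, ?_, hzero⟩
    rintro ⟨i, j⟩ y hy (rfl | rfl)
    exacts [hrow i j hy, hcol i j hy]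
  · rintro ⟨hbij, hmono, hzero⟩
    exact ⟨hbij, fun i j h ↦ hmono (i, j) _ h (.inl rfl),
      fun i j h ↦ hmono (i, j) _ h (.inr rfl), hzero⟩

section StandardFilling

variable {S : Set (ℕ × ℕ)} {n : ℕ} {T : ℕ × ℕ → ℕ} {c : ℕ × ℕ}

namespace IsStandardFilling

theorem finite (hS : S.Finite) : Finite {T // IsStandardFilling S n T} := by
  have := hS.to_subtype
  have := (finite_Iio n).to_subtype
  refine Finite.of_injective (fun T (x : S) ↦ (⟨T.1 x, T.2.1.mapsTo x.2⟩ : Iio n)) ?_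
  intro T T' h
  ext x
  by_cases hx : x ∈ S
  · exact congrArg Subtype.val (congrFun h ⟨x, hx⟩)
  · rw [T.2.2.2 x hx, T'.2.2.2 x hx]

theorem notMem_of_isNextCell (hT : IsStandardFilling S (n + 1) T) (hTc : T c = n) {y : ℕ × ℕ}
    (hy : IsNextCell c y) : y ∉ S := fun hyS ↦ by
  have := hT.2.1 c y hyS hy
  have := hT.1.mapsTo hyS
  simp only [mem_Iio] at this
  omega

theorem erase (hT : IsStandardFilling S (n + 1) T) (hc : c ∈ S) (hTc : T c = n) :
    IsStandardFilling (S \ {c}) n (update T c 0) := by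
  obtain ⟨hbij, hmono, hzero⟩ := hT
  refine ⟨?_, ?_, ?_⟩
  · have := (hbij.sdiff_singleton hc).congr fun x hx ↦ (update_of_ne hx.2 0 T).symm
    rwa [hTc, Iio_add_one_eq_Iic, Iic_sdiff_right] at this
  · rintro x y ⟨hyS, hyc⟩ hxy
    have hxc : x ≠ c := by
      rintro rfl
      exact notMem_of_isNextCell ⟨hbij, hmono, hzero⟩ hTc hxy hyS
    rw [update_of_ne hyc, update_of_ne hxc]
    exact hmono x y hyS hxy
  · intro x hx
    rcases eq_or_ne x c with rfl | hxc
    · exact update_self ..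
    · rw [update_of_ne hxc]
      exact hzero x fun hxS ↦ hx ⟨hxS, hxc⟩

theorem insert (hT : IsStandardFilling S n T) (hc : c ∉ S)
    (hout : ∀ y, IsNextCell c y → y ∉ S) (hin : ∀ x, IsNextCell x c → x ∈ S) :
    IsStandardFilling (insert c S) (n + 1) (update T c n) := by
  obtain ⟨hbij, hmono, hzero⟩ := hT
  have hne : ∀ x ∈ S, x ≠ c := fun x hx h ↦ hc (h ▸ hx)
  refine ⟨?_, ?_, ?_⟩
  · have := (hbij.congr fun x hx ↦ (update_of_ne (hne x hx) n T).symm).insert (a := c)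
      (by simp)
    rwa [update_self, Iio_insert, ← Iio_add_one_eq_Iic] at this
  · rintro x y (rfl | hyS) hxy
    · have hxS := hin x hxy
      rw [update_self, update_of_ne (hne x hxS)]
      exact hbij.mapsTo hxS
    · rw [update_of_ne (hne y hyS)]
      rcases eq_or_ne x c with rfl | hxc
      · exact absurd hyS (hout y hxy)
      · rw [update_of_ne hxc]
        exact hmono x y hyS hxy
  · intro x hx
    rw [mem_insert_iff, not_or] at hx
    rw [update_of_ne hx.1]
    exact hzero x hx.2

end IsStandardFilling

theorem card_standardFilling_max_eq (hS : IsLowerSet S) (hc : c ∈ S)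
    (hout : ∀ y, IsNextCell c y → y ∉ S) :
    Nat.card {T // IsStandardFilling S (n + 1) T ∧ T c = n}
      = Nat.card {T // IsStandardFilling (S \ {c}) n T} := by
  have hS' : insert c (S \ {c}) = S := insert_sdiff_singleton.trans (insert_eq_of_mem hc)
  refine Nat.card_congr
    { toFun T := ⟨update T.1 c 0, T.2.1.erase hc T.2.2⟩
      invFun T := ⟨update T.1 c n, by
        have hin (x) (hx : IsNextCell x c) : x ∈ S \ {c} := by
          rcases hx with rfl | rfl <;> exact ⟨hS (by simp [Prod.le_def]) hc, by simp [Prod.ext_iff]⟩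
        have := T.2.insert (fun h ↦ h.2 rfl) (fun y hy h ↦ hout y hy h.1) hin
        rwa [hS'] at this, update_self ..⟩
      left_inv T := ?_
      right_inv T := ?_ }
  · ext x
    simp [update_idem, ← T.2.2]
  · ext x
    simp [update_idem, ← T.2.2.2 c (fun h ↦ h.2 rfl)]

theorem card_standardFilling_max_eq_zero {y : ℕ × ℕ} (hy : IsNextCell c y) (hyS : y ∈ S) :
    Nat.card {T // IsStandardFilling S (n + 1) T ∧ T c = n} = 0 :=
  @Nat.card_of_isEmpty _ ⟨fun T ↦ T.2.1.notMem_of_isNextCell T.2.2 hy hyS⟩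

theorem card_standardFilling_eq_sum_max (hS : S.Finite) (C : Finset (ℕ × ℕ)) (hCS : ↑C ⊆ S)
    (hC : ∀ c ∈ S, (∀ y, IsNextCell c y → y ∉ S) → c ∈ C) :
    Nat.card {T // IsStandardFilling S (n + 1) T}
      = ∑ c ∈ C, Nat.card {T // IsStandardFilling S (n + 1) T ∧ T c = n} := by
  have := IsStandardFilling.finite (n := n + 1) hS
  have := Fintype.ofFinite {T // IsStandardFilling S (n + 1) T}
  have htop (T : {T // IsStandardFilling S (n + 1) T}) :
      invFunOn T.1 S n ∈ S ∧ T.1 (invFunOn T.1 S n) = n :=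
    invFunOn_pos (T.2.1.surjOn (by simp))
  rw [Nat.card_eq_fintype_card, Fintype.card, Finset.card_eq_sum_card_fiberwise
    (f := fun T ↦ invFunOn T.1 S n) (t := C)
    fun T _ ↦ hC _ (htop T).1 fun y hy ↦ T.2.notMem_of_isNextCell (htop T).2 hy]
  refine Finset.sum_congr rfl fun c hc ↦ ?_
  rw [← Fintype.card_subtype, ← Nat.card_eq_fintype_card]
  refine Nat.card_congr ((Equiv.subtypeSubtypeEquivSubtypeInter _ (invFunOn · S n = c)).trans
    (Equiv.subtypeEquivRight fun T ↦ and_congr_right fun hT ↦ ?_))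
  constructor
  · rintro rfl
    exact (htop ⟨T, hT⟩).2
  · intro hTc
    exact hT.1.injOn (htop ⟨T, hT⟩).1 (hCS hc) ((htop ⟨T, hT⟩).2.trans hTc.symm)

end StandardFilling

theorem pairwise_ge_iff_antitone_getD {l : List ℕ} :
    l.Pairwise (· ≥ ·) ↔ Antitone (l.getD · 0) := by
  induction l with
  | nil => simpa using antitone_const
  | cons x l ih =>
    rw [List.pairwise_cons, ih]
    constructor
    · rintro ⟨hx, hl⟩
      refine antitone_nat_of_succ_le fun i ↦ ?_
      cases i with
      | zero => cases l <;> simp_all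
      | succ i => exact hl i.le_succ
    · intro h
      refine ⟨fun y hy ↦ ?_, fun i j hij ↦ h (Nat.succ_le_succ hij)⟩
      obtain ⟨i, hi, rfl⟩ := List.getElem_of_mem hy
      simpa [List.getD_eq_getElem?_getD, hi] using h (Nat.zero_le (i + 1))

theorem shape_finite (l : List ℕ) : {c | InShape l c}.Finite := by
  refine ((finite_Iio l.length).prod (finite_Iio l.sum)).subset fun c (hc : c.2 < _) ↦ ?_
  by_cases h : c.1 < l.length
  · refine ⟨h, hc.trans_le ?_⟩
    rw [List.getD_eq_getElem _ _ h]
    exact List.le_sum_of_mem (List.getElem_mem h)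
  · simp [List.getD_eq_getElem?_getD, not_lt.1 h] at hc

theorem isLowerSet_shape {l : List ℕ} (hl : l.Pairwise (· ≥ ·)) :
    IsLowerSet {c | InShape l c} := fun _ _ hba ha ↦
  lt_of_le_of_lt hba.2 (lt_of_lt_of_le ha (pairwise_ge_iff_antitone_getD.1 hl hba.1))

theorem fSYT_eq_card {l : List ℕ} (hl : l.Pairwise (· ≥ ·)) :
    fSYT l = Nat.card {T // IsStandardFilling {c | InShape l c} l.sum T} := by
  rw [fSYT, if_pos hl]
  exact Nat.card_congr (Equiv.subtypeEquivRight fun _ ↦ isSYT_iff_isStandardFilling)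

theorem fSYT_of_not_pairwise {l : List ℕ} (hl : ¬ l.Pairwise (· ≥ ·)) : fSYT l = 0 :=
  if_neg hl

def decRow (l : List ℕ) (i : ℕ) : List ℕ := l.set i (l.getD i 0 - 1)

@[simp] theorem decRow_cons_zero (x : ℕ) (l : List ℕ) : decRow (x :: l) 0 = (x - 1) :: l := rfl

@[simp] theorem decRow_cons_succ (x : ℕ) (l : List ℕ) (i : ℕ) :
    decRow (x :: l) (i + 1) = x :: decRow l i := rfl

theorem getD_decRow (l : List ℕ) (i j : ℕ) :
    (decRow l i).getD j 0 = if j = i then l.getD i 0 - 1 else l.getD j 0 := by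
  induction l generalizing i j with
  | nil => simp [decRow]
  | cons x l ih => cases i <;> cases j <;> simp only [decRow_cons_zero, decRow_cons_succ,
    List.getD_cons_zero, List.getD_cons_succ, ih] <;> simp

theorem sum_decRow {l : List ℕ} {i : ℕ} (h : 0 < l.getD i 0) : (decRow l i).sum + 1 = l.sum := by
  induction l generalizing i with
  | nil => simp at h
  | cons x l ih =>
    cases i with
    | zero =>
      simp only [List.getD_cons_zero, decRow_cons_zero, List.sum_cons] at h ⊢
      omega
    | succ i =>
      simp only [List.getD_cons_succ, decRow_cons_succ, List.sum_cons] at h ⊢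
      have := ih h
      omega

theorem shape_decRow {l : List ℕ} {i : ℕ} (h : 0 < l.getD i 0) :
    {c | InShape (decRow l i) c} = {c | InShape l c} \ {(i, l.getD i 0 - 1)} := by
  ext ⟨x, y⟩
  simp only [InShape, getD_decRow, mem_ofPred_eq, mem_sdiff, mem_singleton_iff, Prod.mk.injEq]
  split_ifs with hx
  · subst hx; omega
  · omega

theorem pairwise_decRow_iff {l : List ℕ} (hl : l.Pairwise (· ≥ ·)) {i : ℕ} (h : 0 < l.getD i 0) :
    (decRow l i).Pairwise (· ≥ ·) ↔ l.getD (i + 1) 0 < l.getD i 0 := by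
  have hanti := pairwise_ge_iff_antitone_getD.1 hl
  rw [pairwise_ge_iff_antitone_getD]
  constructor
  · intro hdec
    have := hdec (Nat.le_add_right i 1)
    simp only [getD_decRow, if_pos, Nat.add_one_ne_self, if_false] at this
    omega
  · intro hcorner
    refine antitone_nat_of_succ_le fun j ↦ ?_
    have := hanti (Nat.le_add_right j 1)
    simp only [getD_decRow] at this ⊢
    split_ifs with h1 h2 <;> subst_vars <;> omega

theorem fSYT_eq_sum_fSYT_decRow {l : List ℕ} (hl : l.Pairwise (· ≥ ·)) (hpos : ∀ x ∈ l, 0 < x)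
    (hne : l ≠ []) : fSYT l = ∑ i ∈ Finset.range l.length, fSYT (decRow l i) := by
  have hposD (i) (hi : i ∈ Finset.range l.length) : 0 < l.getD i 0 := by
    rw [Finset.mem_range] at hi
    rw [List.getD_eq_getElem _ _ hi]
    exact hpos _ (List.getElem_mem hi)
  obtain ⟨n, hn⟩ : ∃ n, l.sum = n + 1 := by
    obtain ⟨x, l', rfl⟩ := List.exists_cons_of_ne_nil hne
    have := hpos x List.mem_cons_self
    exact ⟨x - 1 + l'.sum, by simp only [List.sum_cons]; omega⟩
  let lastCell (i : ℕ) : ℕ × ℕ := (i, l.getD i 0 - 1)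
  have hlastCell (i) (hi : i ∈ Finset.range l.length) : lastCell i ∈ {c | InShape l c} := by
    have := hposD i hi
    show l.getD i 0 - 1 < l.getD i 0
    omega
  have hinj : InjOn lastCell (Finset.range l.length) := fun i _ j _ h ↦ congrArg Prod.fst h
  rw [fSYT_eq_card hl, hn, card_standardFilling_eq_sum_max (shape_finite l)
    ((Finset.range l.length).image lastCell) ?_ ?_, Finset.sum_image hinj]
  · refine Finset.sum_congr rfl fun i hi ↦ ?_
    have hsum := sum_decRow (hposD i hi)
    by_cases hcorner : l.getD (i + 1) 0 < l.getD i 0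
    · rw [card_standardFilling_max_eq (isLowerSet_shape hl) (hlastCell i hi) ?_,
        fSYT_eq_card ((pairwise_decRow_iff hl (hposD i hi)).2 hcorner), shape_decRow (hposD i hi),
        show (decRow l i).sum = n by omega]
      rintro y (rfl | rfl) hy <;> simp only [lastCell, InShape, mem_ofPred_eq] at hy <;> omega
    · rw [fSYT_of_not_pairwise (by rwa [pairwise_decRow_iff hl (hposD i hi)]),
        card_standardFilling_max_eq_zero (y := (i + 1, l.getD i 0 - 1)) (.inr rfl)]
      have := hposD i hi
      show l.getD i 0 - 1 < l.getD (i + 1) 0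
      omega
  · simpa [Set.subset_def] using hlastCell
  · rintro ⟨i, j⟩ (hc : j < l.getD i 0) hout
    have hlen : i < l.length := by
      by_contra h
      simp [List.getD_eq_getElem?_getD, not_lt.1 h] at hc
    have hj : ¬ j + 1 < l.getD i 0 := hout _ (.inl rfl)
    refine Finset.mem_image.2 ⟨i, Finset.mem_range.2 hlen, ?_⟩
    simp only [lastCell, Prod.mk.injEq, true_and]
    omega

theorem fSYT_nil : fSYT [] = 1 := by
  have hS : {c | InShape [] c} = ∅ := by ext c; simp [InShape]
  rw [fSYT_eq_card List.Pairwise.nil, List.sum_nil, hS, Nat.card_eq_one_iff_exists]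
  exact ⟨⟨0, by simp [IsStandardFilling]⟩,
    fun T ↦ Subtype.ext (funext fun x ↦ T.2.2.2 x (notMem_empty x))⟩

theorem fSYT_append_zero (l : List ℕ) : fSYT (l ++ [0]) = fSYT l := by
  have hshape : InShape (l ++ [0]) = InShape l := by
    funext ⟨i, j⟩
    rcases lt_or_ge i l.length with h | h
    · simp only [InShape, List.getD_append _ _ _ _ h]
    · simp only [InShape]
      rw [List.getD_append_right _ _ _ _ h, List.getD_eq_default _ _ h]
      cases i - l.length <;> simp
  have hpair : (l ++ [0]).Pairwise (· ≥ ·) ↔ l.Pairwise (· ≥ ·) := by simp [List.pairwise_append]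
  unfold fSYT IsSYT
  rw [hshape, List.sum_append, List.sum_singleton, add_zero]
  exact if_congr hpair rfl rfl

theorem fSYT_singleton (a : ℕ) : fSYT [a] = 1 := by
  induction a with
  | zero => simpa [fSYT_nil] using fSYT_append_zero []
  | succ a ih => simp [fSYT_eq_sum_fSYT_decRow, ih]

theorem fSYT_cons_zero_replicate (a t : ℕ) :
    fSYT (a :: 0 :: List.replicate t 1) = if t = 0 then 1 else 0 := by
  cases t with
  | zero => simpa [fSYT_singleton] using fSYT_append_zero [a]
  | succ t => exact fSYT_of_not_pairwise (by simp)

theorem decRow_replicate_one_last (s : ℕ) :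
    decRow (List.replicate (s + 1) 1) s = List.replicate s 1 ++ [0] := by
  induction s with
  | zero => rfl
  | succ s ih => rw [List.replicate_succ, decRow_cons_succ, ih]; rfl

theorem not_pairwise_decRow_replicate_one {s i : ℕ} (hi : i < s) :
    ¬ (decRow (List.replicate (s + 1) 1) i).Pairwise (· ≥ ·) := by
  rw [pairwise_ge_iff_antitone_getD]
  intro h
  have := h (Nat.le_add_right i 1)
  simp only [getD_decRow, if_pos, Nat.add_one_ne_self, if_false] at this
  simp [List.getD_eq_getElem?_getD, hi, hi.trans (Nat.lt_add_one s)] at this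

theorem sum_fSYT_append_decRow_replicate (p : List ℕ) (t : ℕ) :
    ∑ i ∈ Finset.range t, fSYT (p ++ decRow (List.replicate t 1) i)
      = if t = 0 then 0 else fSYT (p ++ List.replicate (t - 1) 1) := by
  cases t with
  | zero => simp
  | succ s =>
    rw [Finset.sum_range_succ, Finset.sum_eq_zero, decRow_replicate_one_last, ← List.append_assoc,
      fSYT_append_zero]
    · simp
    · intro i hi
      exact fSYT_of_not_pairwise fun h ↦ not_pairwise_decRow_replicate_one
        (Finset.mem_range.1 hi) (List.pairwise_append.1 h).2.1

theorem fSYT_hook_eq_add {a c : ℕ} (h : c ≤ a) (t : ℕ) :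
    fSYT ((a + 1) :: (c + 1) :: List.replicate t 1)
      = fSYT (a :: (c + 1) :: List.replicate t 1) + fSYT ((a + 1) :: c :: List.replicate t 1)
        + if t = 0 then 0 else fSYT ((a + 1) :: (c + 1) :: List.replicate (t - 1) 1) := by
  have hl : ((a + 1) :: (c + 1) :: List.replicate t 1).Pairwise (· ≥ ·) := by
    simp [List.pairwise_replicate, h]
  have hrow := sum_fSYT_append_decRow_replicate [a + 1, c + 1] t
  simp only [List.cons_append, List.nil_append] at hrow
  rw [fSYT_eq_sum_fSYT_decRow hl (by simp) (List.cons_ne_nil _ _), List.length_cons,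
    List.length_cons, List.length_replicate, Finset.sum_range_succ', Finset.sum_range_succ']
  simp only [decRow_cons_succ, decRow_cons_zero, Nat.add_sub_cancel, hrow]
  ring

open scoped Nat

/-- For `c < a`, `hookFactor a c t * (a - c)` is the hook length formula `n! / ∏ hooks` for the
shape `(a, c+1, 1^t)` with `n = a + c + t + 1` cells: its hook product is
`(a+t+1) (c+t+1) a! c! t! / (a - c)`. -/
def hookFactor (a c t : ℕ) : ℚ :=
  (a + c + t + 1)! / ((a + t + 1) * (c + t + 1) * a ! * c ! * t ! : ℚ)

theorem hookFactor_succ_left (a c t : ℕ) :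
    hookFactor (a + 1) c t
      = hookFactor a c t * ((a + c + t + 2) * (a + t + 1) / ((a + 1) * (a + t + 2))) := by
  unfold hookFactor
  rw [show a + 1 + c + t + 1 = a + c + t + 1 + 1 by ring, Nat.factorial_succ (a + c + t + 1),
    Nat.factorial_succ a]
  push_cast
  field_simp
  ring

theorem hookFactor_succ_mid (a c t : ℕ) :
    hookFactor a (c + 1) t
      = hookFactor a c t * ((a + c + t + 2) * (c + t + 1) / ((c + 1) * (c + t + 2))) := by
  unfold hookFactor
  rw [show a + (c + 1) + t + 1 = a + c + t + 1 + 1 by ring, Nat.factorial_succ (a + c + t + 1),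
    Nat.factorial_succ c]
  push_cast
  field_simp
  ring

theorem hookFactor_succ_right (a c t : ℕ) :
    hookFactor a c (t + 1) = hookFactor a c t *
      ((a + c + t + 2) * (a + t + 1) * (c + t + 1) / ((t + 1) * (a + t + 2) * (c + t + 2))) := by
  unfold hookFactor
  rw [show a + c + (t + 1) + 1 = a + c + t + 1 + 1 by ring, Nat.factorial_succ (a + c + t + 1),
    Nat.factorial_succ t]
  push_cast
  field_simp
  ring

theorem hookFactor_zero_zero (a : ℕ) : hookFactor a 0 0 = 1 := by
  unfold hookFactor
  rw [Nat.factorial_succ]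
  push_cast
  field_simp
  ring

theorem fSYT_hook (a c t : ℕ) (h : c ≤ a) :
    (fSYT (a :: (c + 1) :: List.replicate t 1) : ℚ) = hookFactor a c t * (a - c) := by
  induction hn : a + c + t using Nat.strong_induction_on generalizing a c t with
  | _ n ih =>
  have hrec (a' c' t') (hc' : c' ≤ a') (hlt : a' + c' + t' < n) := ih _ hlt a' c' t' hc' rfl
  -- `c = a` is not a partition and both sides vanish; admitting it lets the first term of
  -- `fSYT_hook_eq_add` be rewritten by the induction hypothesis unconditionally.
  obtain rfl | hlt := h.eq_or_lt
  · rw [fSYT_of_not_pairwise (by simp), sub_self, mul_zero, Nat.cast_zero]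
  obtain ⟨a, rfl⟩ := Nat.exists_eq_add_one_of_ne_zero (Nat.ne_zero_of_lt hlt)
  have hca : c ≤ a := Nat.le_of_lt_succ hlt
  rw [fSYT_hook_eq_add hca]
  push_cast
  rw [hrec a c t hca (by omega)]
  rcases c with _ | c <;> rcases t with _ | t
  · rw [fSYT_cons_zero_replicate, if_pos rfl, if_pos rfl]
    simp only [hookFactor_succ_left, hookFactor_zero_zero]
    push_cast
    field_simp
    ring
  · rw [fSYT_cons_zero_replicate, if_neg t.add_one_ne_zero, Nat.add_sub_cancel,
      hrec (a + 1) 0 t (Nat.zero_le _) (by omega)]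
    simp only [hookFactor_succ_left, hookFactor_succ_right]
    push_cast
    field_simp
    ring
  · rw [hrec (a + 1) c 0 (by omega) (by omega)]
    simp only [hookFactor_succ_left, hookFactor_succ_mid, if_pos]
    push_cast
    field_simp
    ring
  · rw [if_neg t.add_one_ne_zero, Nat.add_sub_cancel, hrec (a + 1) c (t + 1) (by omega) (by omega),
      hrec (a + 1) (c + 1) t (by omega) (by omega)]
    simp only [hookFactor_succ_left, hookFactor_succ_mid, hookFactor_succ_right]
    push_cast
    field_simp
    ring

/-- **Lemma.** For `k ≥ 2`, `m ≥ 4`, the difference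
`Δ₃(k,m) = f^{(k,k,1^m)} + f^{(k+1,k+1,1^{m-2})} + f^{(k+2,k+2,1^{m-4})} - f^{(k+2,k,1^{m-2})}`
equals `(2k+m)!/((k+1)!(k+2)! m!) · (k-m+1)(k-m+2)` as rational numbers. -/
theorem Delta3_formula (k m : ℕ) (hk : 2 ≤ k) (hm : 4 ≤ m) :
    (fSYT (k :: k :: List.replicate m 1) : ℚ)
      + fSYT ((k + 1) :: (k + 1) :: List.replicate (m - 2) 1)
      + fSYT ((k + 2) :: (k + 2) :: List.replicate (m - 4) 1)
      - fSYT ((k + 2) :: k :: List.replicate (m - 2) 1)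
    = (Nat.factorial (2 * k + m) : ℚ) /
        (Nat.factorial (k + 1) * Nat.factorial (k + 2) * Nat.factorial m)
        * ((k : ℚ) - m + 1) * ((k : ℚ) - m + 2) := by
  obtain ⟨j, rfl⟩ : ∃ j, k = j + 1 := ⟨k - 1, by omega⟩
  obtain ⟨s, rfl⟩ : ∃ s, m = s + 4 := ⟨m - 4, by omega⟩
  rw [show s + 4 - 2 = s + 2 by omega, show s + 4 - 4 = s by omega,
    fSYT_hook (j + 1) j (s + 4) (by omega), fSYT_hook (j + 1 + 1) (j + 1) (s + 2) (by omega),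
    fSYT_hook (j + 1 + 2) (j + 1 + 1) s (by omega), fSYT_hook (j + 1 + 2) j (s + 2) (by omega)]
  simp only [hookFactor_succ_left, hookFactor_succ_mid, hookFactor_succ_right]
  unfold hookFactor
  rw [show 2 * (j + 1) + (s + 4) = j + j + s + 1 + 5 by ring]
  simp only [Nat.factorial_succ]
  push_cast
  field_simp
  ring
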